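/- (Theorem 4, repeated root.) In the extended-Lipschitz setting with forcing and with p̂ < 0, k̂ ≥ 1, F̂ > 0, L̂ as above (p(t) ≤ p̂, 1 ≤ k(t) ≤ k̂, ‖F t‖ ≤ F̂, L(t, X) ≤ L̂(X)), define Q(X) = p̂ X + k̂ (L̂(X) + F̂) and suppose d > 0 satisfies Q(d) = 0 and Q(X) > 0 for all X ∈ [0, d). Then every solution x of ẋ = A(t)x + f(t,x) + F(t) with ‖(W t₀)⁻¹ (x t₀)‖ ≤ d satisfies ‖x(t)‖ ≤ d for all t ≥ t₀. -/

import Mathlib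

/-!
Put `z = W⁻¹ x`. Since `W' = A W`, variation of constants gives `z' = W⁻¹ (f(t, x) + F)`, hence
`‖x t‖ ≤ r t := ‖W t‖ (‖z t₀‖ + ∫_{t₀}^t ‖W⁻¹‖ (L̂ ‖x‖ + ‖F‖))`. With `‖W t‖ = exp ∫ p`,
differentiating gives `r' = p r + k (L̂ ‖x‖ + ‖F‖) ≤ Q(r)`, by `‖x‖ ≤ r` and monotonicity of `L̂`.
As `r(t₀) ≤ d`, `Q(d) = 0` and `Q(y) ≤ C (y - d)` just above `d`, `r` can never cross the
barriers `d + η e^{(|C| + 1)(t - T)}` on `[t₀, T]`, and letting `η → 0` gives `r(T) ≤ d`.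
-/

open Set Real

section Derivatives

variable {𝕜 : Type*} [NontriviallyNormedField 𝕜]

theorem HasDerivAt.inverse_of_mul_eq_one {R : Type*} [NormedRing R] [HasSummableGeomSeries R]
    [NormedAlgebra 𝕜 R] {W V : 𝕜 → R} {W' : R} {t : 𝕜}
    (h₁ : ∀ s, W s * V s = 1) (h₂ : ∀ s, V s * W s = 1) (hW : HasDerivAt W W' t) :
    HasDerivAt V (-(V t * W' * V t)) t := by
  let u : 𝕜 → Rˣ := fun s => ⟨W s, V s, h₁ s, h₂ s⟩
  have hV : Ring.inverse ∘ W = V := funext fun s => Ring.inverse_unit (u s)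
  have h := (hasFDerivAt_ringInverse (𝕜 := 𝕜) (u t)).comp_hasDerivAt t hW
  rwa [hV] at h

theorem hasDerivAt_inverse_apply {E : Type*} [NormedAddCommGroup E] [NormedSpace 𝕜 E]
    [CompleteSpace E] {A W V : 𝕜 → E →L[𝕜] E} {x : 𝕜 → E} {v : E} {t : 𝕜}
    (h₁ : ∀ s, W s * V s = 1) (h₂ : ∀ s, V s * W s = 1) (hW : HasDerivAt W (A t * W t) t)
    (hx : HasDerivAt x (A t (x t) + v) t) :
    HasDerivAt (fun s => V s (x s)) (V t v) t := by
  convert (hW.inverse_of_mul_eq_one h₁ h₂).clm_apply hx using 1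
  have hWV : W t (V t (x t)) = x t := congrArg (· (x t)) (h₁ t)
  simp only [neg_apply, mul_apply_eq_comp, hWV, map_add]
  abel

end Derivatives

section Estimates

variable {E : Type*} [NormedAddCommGroup E] [NormedSpace ℝ E]

theorem norm_le_norm_add_integral_of_norm_deriv_le {z z' : ℝ → E} {g : ℝ → ℝ} {a : ℝ}
    (hg : Continuous g) (hz : ∀ t ≥ a, HasDerivAt z (z' t) t) (hz' : ∀ t ≥ a, ‖z' t‖ ≤ g t) :
    ∀ t ≥ a, ‖z t‖ ≤ ‖z a‖ + ∫ s in a..t, g s := by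
  intro t ht
  refine image_norm_le_of_norm_deriv_right_le_deriv_boundary (a := a) (b := t)
    (fun s hs => (hz s hs.1).continuousAt.continuousWithinAt)
    (fun s hs => (hz s hs.1).hasDerivWithinAt) (by simp)
    (fun s => ((hg.integral_hasStrictDerivAt a s).hasDerivAt).const_add _)
    (fun s hs => hz' s hs.1) ⟨ht, le_rfl⟩

theorem norm_le_of_fundamental_solution [CompleteSpace E] {A W V : ℝ → E →L[ℝ] E} {x b : ℝ → E}
    {g : ℝ → ℝ} {a : ℝ} (h₁ : ∀ s, W s * V s = 1) (h₂ : ∀ s, V s * W s = 1)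
    (hW : ∀ t ≥ a, HasDerivAt W (A t * W t) t) (hx : ∀ t ≥ a, HasDerivAt x (A t (x t) + b t) t)
    (hg : Continuous g) (hb : ∀ t ≥ a, ‖V t (b t)‖ ≤ g t) :
    ∀ t ≥ a, ‖x t‖ ≤ ‖W t‖ * (‖V a (x a)‖ + ∫ s in a..t, g s) := by
  intro t ht
  have hz := norm_le_norm_add_integral_of_norm_deriv_le hg
    (fun s hs => hasDerivAt_inverse_apply h₁ h₂ (hW s hs) (hx s hs)) hb t ht
  calc ‖x t‖ = ‖W t (V t (x t))‖ := by rw [← mul_apply_eq_comp, h₁, one_apply_eq_self]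
    _ ≤ ‖W t‖ * ‖V t (x t)‖ := (W t).le_opNorm _
    _ ≤ _ := by gcongr

end Estimates

theorem LocallyLipschitz.exists_sub_le_mul_sub {Q : ℝ → ℝ} (hQ : LocallyLipschitz Q) (d : ℝ) :
    ∃ δ > 0, ∃ C : ℝ, ∀ y ∈ Icc d (d + δ), Q y - Q d ≤ C * (y - d) := by
  obtain ⟨K, s, hs, hK⟩ := hQ d
  obtain ⟨δ, hδ, hball⟩ := Metric.mem_nhds_iff.1 hs
  refine ⟨δ / 2, half_pos hδ, K, fun y hy => ?_⟩
  have hys : y ∈ s := hball <| by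
    rw [Metric.mem_ball, dist_eq, abs_of_nonneg (by linarith [hy.1])]; linarith [hy.2]
  have h := hK.dist_le_mul y hys d (mem_of_mem_nhds hs)
  rw [dist_eq, dist_eq, abs_of_nonneg (by linarith [hy.1] : 0 ≤ y - d)] at h
  exact (le_abs_self _).trans h

theorem le_of_deriv_le_of_le_mul_sub {r r' Q : ℝ → ℝ} {a d δ C : ℝ} (hδ : 0 < δ)
    (hr : ∀ t ≥ a, HasDerivAt r (r' t) t) (hrQ : ∀ t ≥ a, r' t ≤ Q (r t))
    (hQ : ∀ y ∈ Icc d (d + δ), Q y ≤ C * (y - d)) (ha : r a ≤ d) :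
    ∀ t ≥ a, r t ≤ d := by
  intro T hT
  set K := |C| + 1
  have barrier : ∀ η ∈ Ioc 0 δ, r T ≤ d + η := by
    rintro η ⟨hη, hηδ⟩
    have hB : ∀ t, HasDerivAt (fun t => d + η * exp (K * (t - T)))
        (K * (η * exp (K * (t - T)))) t := fun t =>
      ((((hasDerivAt_id' t).sub_const T).const_mul K).exp.const_mul η |>.const_add d).congr_deriv
        (by ring)
    have touch : ∀ u ∈ Ico a T, r u = d + η * exp (K * (u - T)) →
        r' u < K * (η * exp (K * (u - T))) := by
      intro u hu hru
      have he : 0 < η * exp (K * (u - T)) := by positivity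
      have heη : η * exp (K * (u - T)) ≤ η := mul_le_of_le_one_right hη.le <|
        exp_le_one_iff.2 <| mul_nonpos_of_nonneg_of_nonpos (by positivity) (by linarith [hu.2])
      calc r' u ≤ Q (r u) := hrQ u hu.1
        _ ≤ C * (η * exp (K * (u - T))) := by
          simpa [hru] using hQ (r u) ⟨by rw [hru]; linarith, by rw [hru]; linarith⟩
        _ < K * (η * exp (K * (u - T))) := by nlinarith [le_abs_self C]
    simpa using image_le_of_deriv_right_lt_deriv_boundary' (a := a) (b := T)
      (B := fun t => d + η * exp (K * (t - T)))
      (fun s hs => (hr s hs.1).continuousAt.continuousWithinAt)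
      (fun s hs => (hr s hs.1).hasDerivWithinAt)
      (ha.trans (le_add_of_nonneg_right (by positivity)))
      (fun s _ => (hB s).continuousAt.continuousWithinAt) (fun s _ => (hB s).hasDerivWithinAt)
      touch ⟨hT, le_rfl⟩
  exact le_of_forall_pos_le_add fun ε hε =>
    (barrier (min ε δ) ⟨lt_min hε hδ, min_le_right _ _⟩).trans (by linarith [min_le_left ε δ])

theorem le_of_deriv_le_comp_of_locallyLipschitz {r r' Q : ℝ → ℝ} {a d : ℝ}
    (hQ : LocallyLipschitz Q) (hQd : Q d ≤ 0)
    (hr : ∀ t ≥ a, HasDerivAt r (r' t) t) (hrQ : ∀ t ≥ a, r' t ≤ Q (r t)) (ha : r a ≤ d) :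
    ∀ t ≥ a, r t ≤ d := by
  obtain ⟨δ, hδ, C, hC⟩ := hQ.exists_sub_le_mul_sub d
  exact le_of_deriv_le_of_le_mul_sub (C := C) hδ hr hrQ (fun y hy => by linarith [hC y hy]) ha

theorem theorem4_repeated_root_general
    {n : ℕ}
    (A : ℝ → (EuclideanSpace ℝ (Fin n) →L[ℝ] EuclideanSpace ℝ (Fin n)))
    (f : ℝ → EuclideanSpace ℝ (Fin n) → EuclideanSpace ℝ (Fin n))
    (F : ℝ → EuclideanSpace ℝ (Fin n)) (hF : Continuous F)
    (W Winv : ℝ → (EuclideanSpace ℝ (Fin n) →L[ℝ] EuclideanSpace ℝ (Fin n)))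
    (hWinv₁ : ∀ t, (W t).comp (Winv t) = ContinuousLinearMap.id ℝ (EuclideanSpace ℝ (Fin n)))
    (hWinv₂ : ∀ t, (Winv t).comp (W t) = ContinuousLinearMap.id ℝ (EuclideanSpace ℝ (Fin n)))
    (hW_deriv : ∀ t, HasDerivAt W ((A t).comp (W t)) t)
    (t₀ : ℝ)
    (p : ℝ → ℝ) (hp : Continuous p)
    (hWp : ∀ t ≥ t₀, ‖W t‖ = Real.exp (∫ s in t₀..t, p s))
    (k : ℝ → ℝ) (hk : ∀ t, k t = ‖W t‖ * ‖Winv t‖)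
    -- extended-Lipschitz setting
    (L : ℝ → ℝ → ℝ)
    (hfL : ∀ t ≥ t₀, ∀ y : EuclideanSpace ℝ (Fin n), ‖f t y‖ ≤ L t ‖y‖)
    -- bounds by constants and an autonomous majorant
    (phat khat Fhat : ℝ)
    (Lhat : ℝ → ℝ) (hLhat_cont : Continuous Lhat) (hLhat_mono : Monotone Lhat)
    (hLhat_lip : LocallyLipschitz Lhat) (hLhat0 : Lhat 0 = 0)
    (hpb : ∀ t ≥ t₀, p t ≤ phat)
    (hkb : ∀ t ≥ t₀, 1 ≤ k t ∧ k t ≤ khat)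
    (hFb : ∀ t ≥ t₀, ‖F t‖ ≤ Fhat)
    (hLb : ∀ t ≥ t₀, ∀ X ≥ (0 : ℝ), L t X ≤ Lhat X)
    (Q : ℝ → ℝ) (hQdef : ∀ X, Q X = phat * X + khat * (Lhat X + Fhat))
    (d : ℝ)
    (hQroot : Q d = 0)
    (x : ℝ → EuclideanSpace ℝ (Fin n))
    (hx : ∀ t ≥ t₀, HasDerivAt x (A t (x t) + f t (x t) + F t) t)
    (hxinit : ‖(Winv t₀) (x t₀)‖ ≤ d) :
    ∀ t ≥ t₀, ‖x t‖ ≤ d := by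
  have hWinv_cont : Continuous Winv := continuous_iff_continuousAt.2 fun t =>
    ((hW_deriv t).inverse_of_mul_eq_one hWinv₁ hWinv₂).continuousAt
  -- `x` is only differentiable on `[t₀, ∞)`; freezing it left of `t₀` keeps the integrand continuous
  set y := fun s => x (max t₀ s)
  have hy : Continuous y :=
    ContinuousOn.comp_continuous (fun s hs => (hx s hs).continuousAt.continuousWithinAt)
      (continuous_const.max continuous_id) fun s => le_max_left t₀ s
  set g := fun s => ‖Winv s‖ * (Lhat ‖y s‖ + ‖F s‖)
  have hg : Continuous g := by fun_prop
  have hgx : ∀ t ≥ t₀, g t = ‖Winv t‖ * (Lhat ‖x t‖ + ‖F t‖) := fun t ht => by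
    simp only [g, y, max_eq_right ht]
  have hbound : ∀ t ≥ t₀, ‖Winv t (f t (x t) + F t)‖ ≤ g t := fun t ht => by
    have hfF : ‖f t (x t) + F t‖ ≤ Lhat ‖x t‖ + ‖F t‖ := by
      linarith [norm_add_le (f t (x t)) (F t), hfL t ht (x t), hLb t ht ‖x t‖ (norm_nonneg _)]
    calc ‖Winv t (f t (x t) + F t)‖ ≤ ‖Winv t‖ * ‖f t (x t) + F t‖ := (Winv t).le_opNorm _
      _ ≤ ‖Winv t‖ * (Lhat ‖x t‖ + ‖F t‖) := by gcongr
      _ = g t := (hgx t ht).symm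
  set P := fun t => ∫ s in t₀..t, p s
  set r := fun t => exp (P t) * (‖Winv t₀ (x t₀)‖ + ∫ s in t₀..t, g s)
  have hxr : ∀ t ≥ t₀, ‖x t‖ ≤ r t := fun t ht =>
    (norm_le_of_fundamental_solution hWinv₁ hWinv₂ (fun t _ => hW_deriv t)
      (fun t ht => (hx t ht).congr_deriv (add_assoc _ _ _)) hg hbound t ht).trans_eq
      (by rw [hWp t ht])
  have hr : ∀ t, HasDerivAt r (p t * r t + exp (P t) * g t) t := fun t =>
    (((hp.integral_hasStrictDerivAt t₀ t).hasDerivAt.exp).mul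
      ((hg.integral_hasStrictDerivAt t₀ t).hasDerivAt.const_add _)).congr_deriv (by ring)
  have hrQ : ∀ t ≥ t₀, p t * r t + exp (P t) * g t ≤ Q (r t) := by
    intro t ht
    obtain ⟨hk1, hk2⟩ := hkb t ht
    have hr0 : 0 ≤ r t := (norm_nonneg _).trans (hxr t ht)
    have hkg : exp (P t) * g t = k t * (Lhat ‖x t‖ + ‖F t‖) := by
      rw [hgx t ht, hk, ← hWp t ht]; ring
    have hLx : 0 ≤ Lhat ‖x t‖ := hLhat0 ▸ hLhat_mono (norm_nonneg _)
    rw [hkg, hQdef]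
    gcongr
    · exact hpb t ht
    · linarith
    · exact hLhat_mono (hxr t ht)
    · exact hFb t ht
  have hQ : LocallyLipschitz Q := by
    rw [show Q = _ from funext hQdef]
    exact (lipschitzWith_smul phat).locallyLipschitz.add
      ((lipschitzWith_smul khat).locallyLipschitz.comp (hLhat_lip.add (.const Fhat)))
  intro t ht
  exact (hxr t ht).trans (le_of_deriv_le_comp_of_locallyLipschitz hQ hQroot.le (fun t _ => hr t) hrQ
    (by simpa [r, P] using hxinit) t ht)

/-- Theorem 4, repeated root: with forcing, bounds `p(t) ≤ p̂ < 0`, `1 ≤ k(t) ≤ k̂`,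
`‖F t‖ ≤ F̂`, `L(t,X) ≤ L̂(X)`, let `Q(X) = p̂ X + k̂ (L̂(X) + F̂)` satisfy `Q(d) = 0`
and `Q > 0` on `[0, d)`. Then every solution of `ẋ = A(t)x + f(t,x) + F(t)` with
`‖(W t₀)⁻¹ x(t₀)‖ ≤ d` satisfies `‖x(t)‖ ≤ d` for all `t ≥ t₀`. -/
theorem theorem4_repeated_root
    {n : ℕ} (hn : 1 ≤ n)
    (A : ℝ → (EuclideanSpace ℝ (Fin n) →L[ℝ] EuclideanSpace ℝ (Fin n)))
    (hA : Continuous A)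
    (f : ℝ → EuclideanSpace ℝ (Fin n) → EuclideanSpace ℝ (Fin n))
    (hf : Continuous fun q : ℝ × EuclideanSpace ℝ (Fin n) => f q.1 q.2)
    (F : ℝ → EuclideanSpace ℝ (Fin n)) (hF : Continuous F)
    (W Winv : ℝ → (EuclideanSpace ℝ (Fin n) →L[ℝ] EuclideanSpace ℝ (Fin n)))
    (hWinv₁ : ∀ t, (W t).comp (Winv t) = ContinuousLinearMap.id ℝ (EuclideanSpace ℝ (Fin n)))
    (hWinv₂ : ∀ t, (Winv t).comp (W t) = ContinuousLinearMap.id ℝ (EuclideanSpace ℝ (Fin n)))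
    (hWinv_cont : Continuous Winv)
    (hW_deriv : ∀ t, HasDerivAt W ((A t).comp (W t)) t)
    (t₀ : ℝ) (hWnorm : ‖W t₀‖ = 1)
    (p : ℝ → ℝ) (hp : Continuous p)
    (hWp : ∀ t ≥ t₀, ‖W t‖ = Real.exp (∫ s in t₀..t, p s))
    (k : ℝ → ℝ) (hk : ∀ t, k t = ‖W t‖ * ‖Winv t‖)
    -- extended-Lipschitz setting
    (L : ℝ → ℝ → ℝ) (hL : Continuous fun q : ℝ × ℝ => L q.1 q.2)
    (hL0 : ∀ t, L t 0 = 0)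
    (hLmono : ∀ t, Monotone (L t))
    (hLlip : ∀ t, LocallyLipschitz (L t))
    (hfL : ∀ t ≥ t₀, ∀ y : EuclideanSpace ℝ (Fin n), ‖f t y‖ ≤ L t ‖y‖)
    -- bounds by constants and an autonomous majorant
    (phat khat Fhat : ℝ) (hphat : phat < 0) (hkhat : 1 ≤ khat) (hFhat : 0 < Fhat)
    (Lhat : ℝ → ℝ) (hLhat_cont : Continuous Lhat) (hLhat_mono : Monotone Lhat)
    (hLhat_lip : LocallyLipschitz Lhat) (hLhat0 : Lhat 0 = 0)
    (hpb : ∀ t ≥ t₀, p t ≤ phat)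
    (hkb : ∀ t ≥ t₀, 1 ≤ k t ∧ k t ≤ khat)
    (hFb : ∀ t ≥ t₀, ‖F t‖ ≤ Fhat)
    (hLb : ∀ t ≥ t₀, ∀ X ≥ (0 : ℝ), L t X ≤ Lhat X)
    (Q : ℝ → ℝ) (hQdef : ∀ X, Q X = phat * X + khat * (Lhat X + Fhat))
    (d : ℝ) (hd : 0 < d)
    (hQroot : Q d = 0)
    (hQpos : ∀ X ∈ Set.Ico (0 : ℝ) d, 0 < Q X)
    (x : ℝ → EuclideanSpace ℝ (Fin n))
    (hx : ∀ t ≥ t₀, HasDerivAt x (A t (x t) + f t (x t) + F t) t)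
    (hxinit : ‖(Winv t₀) (x t₀)‖ ≤ d) :
    ∀ t ≥ t₀, ‖x t‖ ≤ d :=
  theorem4_repeated_root_general A f F hF W Winv hWinv₁ hWinv₂ hW_deriv t₀ p hp hWp k hk L hfL phat
    khat Fhat Lhat hLhat_cont hLhat_mono hLhat_lip hLhat0 hpb hkb hFb hLb Q hQdef d hQroot x hx
    hxinit
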